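/- Let K be the NEC-type presented group with presentation ⟨x₁,…,x_γ, e, τ₁,…,τ_{r+1} ∣ x₁² = ⋯ = x_γ² = τ₁² = ⋯ = τ_{r+1}² = 1, e⁻¹τ_{r+1}e = τ₁, x_γ⋯x₂x₁e = 1, (τ₁τ₂)^{n₁} = ⋯ = (τ_rτ_{r+1})^{n_r} = 1⟩, let θ : K → C₂ be the homomorphism sending each x_j and each τ_k to a and e to 1, let Δ̂ = ker θ, and set e₁ = e, e₂ = τ₁eτ₁ ∈ Δ̂. Then for every commutative group A and every group homomorphism ζ : Δ̂ → A, one has e₁e₂ ∈ ker ζ, and ker ζ is a normal subgroup of K. -/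
import Mathlib


/-- Generators of the NEC-type group: `x 0, …, x (γ-1)` (the `x₁,…,x_γ` of the paper),
`e`, and `τ 0, …, τ r` (the reflections `τ₁,…,τ_{r+1}` of the paper). -/
inductive NECGen (γ r : ℕ) : Type
  | x : Fin γ → NECGen γ r
  | e : NECGen γ r
  | τ : Fin (r + 1) → NECGen γ r

/-- The defining relators of the NEC-type group:
`xⱼ² = τₖ² = 1`, `e⁻¹ τ_{r+1} e τ₁⁻¹ = 1`, `x_γ ⋯ x₂ x₁ e = 1`, `(τₖ τ_{k+1})^{nₖ} = 1`. -/
def necRels (γ r : ℕ) (n : Fin r → ℕ) : Set (FreeGroup (NECGen γ r)) :=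
  (Set.range fun j : Fin γ => (FreeGroup.of (NECGen.x j)) ^ 2) ∪
  (Set.range fun k : Fin (r + 1) => (FreeGroup.of (NECGen.τ k)) ^ 2) ∪
  {(FreeGroup.of (NECGen.e : NECGen γ r))⁻¹ * FreeGroup.of (NECGen.τ (Fin.last r)) *
      FreeGroup.of (NECGen.e : NECGen γ r) * (FreeGroup.of (NECGen.τ (0 : Fin (r + 1))))⁻¹} ∪
  {(List.ofFn fun j : Fin γ => FreeGroup.of (NECGen.x j.rev)).prod *
      FreeGroup.of (NECGen.e : NECGen γ r)} ∪
  (Set.range fun k : Fin r =>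
    (FreeGroup.of (NECGen.τ k.castSucc) * FreeGroup.of (NECGen.τ k.succ)) ^ n k)

/-- The NEC-type presented group `K` with signature `(0; +; [2,…,2], {(n₁,…,n_r)})`. -/
abbrev NECGroup (γ r : ℕ) (n : Fin r → ℕ) := PresentedGroup (necRels γ r n)

/-- The generator `x_{j+1}` of `K` (0-indexed). -/
def Kx {γ r : ℕ} {n : Fin r → ℕ} (j : Fin γ) : NECGroup γ r n :=
  PresentedGroup.of (NECGen.x j)

/-- The generator `e` of `K`. -/
def Ke {γ r : ℕ} {n : Fin r → ℕ} : NECGroup γ r n :=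
  PresentedGroup.of NECGen.e

/-- The generator (reflection) `τ_{k+1}` of `K` (0-indexed). -/
def Kτ {γ r : ℕ} {n : Fin r → ℕ} (k : Fin (r + 1)) : NECGroup γ r n :=
  PresentedGroup.of (NECGen.τ k)

/-- The cyclic group `C₂` of order two. -/
abbrev C₂ := Multiplicative (ZMod 2)

/-- The nontrivial element `a` of `C₂`. -/
def C₂a : C₂ := Multiplicative.ofAdd 1


section NECAux

variable {γ r : ℕ} {n : Fin r → ℕ}

private lemma necRel_eq_one {w : FreeGroup (NECGen γ r)} (hw : w ∈ necRels γ r n) :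
    PresentedGroup.mk (necRels γ r n) w = 1 :=
  (QuotientGroup.eq_one_iff w).mpr (Subgroup.subset_normalClosure hw)

private lemma Kx_sq (j : Fin γ) : (Kx (n := n) j) * Kx j = 1 := by
  have h : ((FreeGroup.of (NECGen.x j) : FreeGroup (NECGen γ r)) ^ 2) ∈ necRels γ r n := by
    left; left; left; left; exact ⟨j, rfl⟩
  have h2 := necRel_eq_one (n := n) h
  rwa [map_pow, pow_two] at h2

private lemma Kτ_sq (k : Fin (r + 1)) : (Kτ (n := n) k : NECGroup γ r n) * Kτ k = 1 := by
  have h : ((FreeGroup.of (NECGen.τ k) : FreeGroup (NECGen γ r)) ^ 2) ∈ necRels γ r n := by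
    left; left; left; right; exact ⟨k, rfl⟩
  have h2 := necRel_eq_one (n := n) h
  rwa [map_pow, pow_two] at h2

private lemma Ke_rel :
    (List.ofFn fun j : Fin γ => Kx (n := n) j.rev).prod * Ke = 1 := by
  have h : ((List.ofFn fun j : Fin γ => FreeGroup.of (NECGen.x j.rev)).prod *
      FreeGroup.of (NECGen.e : NECGen γ r)) ∈ necRels γ r n := by
    left; right; rfl
  have h2 := necRel_eq_one (n := n) h
  rw [map_mul, map_list_prod, List.map_ofFn] at h2
  exact h2

end NECAux

/-- Lemma 1 of the paper: With `Δ̂ = ker θ ≤ K`, `e₁ = e` and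
`e₂ = τ₁ e τ₁` (both in `Δ̂`), for every commutative group `A` and every homomorphism
`ζ : Δ̂ → A`, one has `e₁ e₂ ∈ ker ζ`, and `ker ζ` (regarded as a subgroup of `K`)
is a normal subgroup of `K`. -/
theorem necGroup_lemma1 (γ r : ℕ) (hγ : 1 ≤ γ) (hr : 1 ≤ r)
    (n : Fin r → ℕ) (hn : ∀ k, 2 ≤ n k)
    (θ : NECGroup γ r n →* C₂)
    (hθx : ∀ j : Fin γ, θ (Kx j) = C₂a)
    (hθe : θ Ke = 1)
    (hθτ : ∀ k : Fin (r + 1), θ (Kτ k) = C₂a)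
    {A : Type*} [CommGroup A] (ζ : θ.ker →* A) :
    (⟨Ke * (Kτ (0 : Fin (r + 1)) * Ke * Kτ (0 : Fin (r + 1))),
        by simp only [MonoidHom.mem_ker, map_mul, hθe, hθτ, one_mul, mul_one]; decide⟩ :
      θ.ker) ∈ ζ.ker ∧
    (Subgroup.map θ.ker.subtype ζ.ker).Normal := by
  classical
  set t : NECGroup γ r n := Kτ (0 : Fin (r + 1)) with ht_def
  have ht2 : t * t = 1 := Kτ_sq _
  have hta : θ t = C₂a := hθτ 0
  have htinv : t⁻¹ = t := inv_eq_of_mul_eq_one_right ht2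
  have htt : ∀ y : NECGroup γ r n, t * (t * y) = y := fun y => by
    rw [← mul_assoc, ht2, one_mul]
  -- the generating set S of K
  set S : Set (NECGroup γ r n) := Set.range Kx ∪ Set.range Kτ with hS_def
  have hs2 : ∀ s ∈ S, s * s = 1 := by
    rintro s (⟨j, rfl⟩ | ⟨k, rfl⟩)
    exacts [Kx_sq j, Kτ_sq k]
  have hsinv : ∀ s ∈ S, s⁻¹ = s := fun s hs => inv_eq_of_mul_eq_one_right (hs2 s hs)
  have hsθ : ∀ s ∈ S, θ s = C₂a := by
    rintro s (⟨j, rfl⟩ | ⟨k, rfl⟩)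
    exacts [hθx j, hθτ k]
  have hC : ∀ c : C₂, c = 1 ∨ c = C₂a := by decide
  have hS : Subgroup.closure S = ⊤ := by
    rw [eq_top_iff, ← PresentedGroup.closure_range_of (necRels γ r n)]
    refine (Subgroup.closure_le _).mpr ?_
    rintro _ ⟨g, rfl⟩
    cases g with
    | x j => exact Subgroup.subset_closure (Or.inl ⟨j, rfl⟩)
    | τ k => exact Subgroup.subset_closure (Or.inr ⟨k, rfl⟩)
    | e =>
        have hP : (List.ofFn fun j : Fin γ => Kx (n := n) j.rev).prod ∈ Subgroup.closure S := by
          refine Subgroup.list_prod_mem _ ?_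
          intro x hx
          rw [List.mem_ofFn] at hx
          obtain ⟨j, rfl⟩ := hx
          exact Subgroup.subset_closure (Or.inl ⟨j.rev, rfl⟩)
        have he : (PresentedGroup.of NECGen.e : NECGroup γ r n) =
            ((List.ofFn fun j : Fin γ => Kx (n := n) j.rev).prod)⁻¹ :=
          eq_inv_of_mul_eq_one_right Ke_rel
        rw [SetLike.mem_coe, he]
        exact inv_mem hP
  -- the generating set k of the kernel
  set ks : Set (NECGroup γ r n) := (fun s => s * t) '' S with hks_def
  have hkθ : ∀ u ∈ ks, u ∈ θ.ker := by
    rintro _ ⟨s, hs, rfl⟩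
    rw [MonoidHom.mem_ker, map_mul, hsθ s hs, hta]
    decide
  have hle : Subgroup.closure ks ≤ θ.ker := (Subgroup.closure_le _).mpr hkθ
  have hconjH : ∀ w ∈ Subgroup.closure ks, t * w * t ∈ Subgroup.closure ks := by
    intro w hw
    refine Subgroup.closure_induction
      (p := fun w _ => t * w * t ∈ Subgroup.closure ks) ?_ ?_ ?_ ?_ hw
    · rintro _ ⟨s, hs, rfl⟩
      have e1 : t * (s * t) * t = (s * t)⁻¹ := by
        rw [mul_inv_rev, htinv, hsinv s hs]
        simp [mul_assoc, ht2]
      rw [e1]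
      exact inv_mem (Subgroup.subset_closure ⟨s, hs, rfl⟩)
    · show t * 1 * t ∈ Subgroup.closure ks
      rw [mul_one, ht2]; exact one_mem _
    · intro x y _ _ ihx ihy
      have e1 : t * (x * y) * t = (t * x * t) * (t * y * t) := by
        simp [mul_assoc, htt]
      rw [e1]; exact mul_mem ihx ihy
    · intro x _ ihx
      have e1 : t * x⁻¹ * t = (t * x * t)⁻¹ := by
        simp [mul_inv_rev, htinv, mul_assoc]
      rw [e1]; exact inv_mem ihx
  have hkermain : ∀ w : NECGroup γ r n,
      (θ w = 1 → w ∈ Subgroup.closure ks) ∧ (θ w = C₂a → w * t ∈ Subgroup.closure ks) := by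
    intro w
    have hw : w ∈ Subgroup.closure S := hS ▸ Subgroup.mem_top w
    refine Subgroup.closure_induction
      (p := fun w _ => (θ w = 1 → w ∈ Subgroup.closure ks) ∧
        (θ w = C₂a → w * t ∈ Subgroup.closure ks)) ?_ ?_ ?_ ?_ hw
    · intro s hs
      constructor
      · intro h; rw [hsθ s hs] at h; exact absurd h (by decide)
      · intro _; exact Subgroup.subset_closure ⟨s, hs, rfl⟩
    · refine ⟨fun _ => one_mem _, fun h => ?_⟩
      rw [map_one] at h; exact absurd h (by decide)
    · intro x y _ _ ihx ihy
      rcases hC (θ x) with h1 | h1 <;> rcases hC (θ y) with h2 | h2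
      · refine ⟨fun _ => mul_mem (ihx.1 h1) (ihy.1 h2), fun h => ?_⟩
        rw [map_mul, h1, h2] at h; exact absurd h (by decide)
      · refine ⟨fun h => ?_, fun _ => ?_⟩
        · rw [map_mul, h1, h2] at h; exact absurd h (by decide)
        · rw [mul_assoc]; exact mul_mem (ihx.1 h1) (ihy.2 h2)
      · refine ⟨fun h => ?_, fun _ => ?_⟩
        · rw [map_mul, h1, h2] at h; exact absurd h (by decide)
        · have e1 : x * y * t = (x * t) * (t * y * t) := by
            simp [mul_assoc, htt]
          rw [e1]; exact mul_mem (ihx.2 h1) (hconjH y (ihy.1 h2))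
      · refine ⟨fun _ => ?_, fun h => ?_⟩
        · have e1 : x * y = (x * t) * (t * (y * t) * t) := by
            simp [mul_assoc, htt, ht2]
          rw [e1]; exact mul_mem (ihx.2 h1) (hconjH _ (ihy.2 h2))
        · rw [map_mul, h1, h2] at h; exact absurd h (by decide)
    · intro x _ ihx
      constructor
      · intro h
        rw [map_inv] at h
        have hx1 : θ x = 1 := by
          rcases hC (θ x) with h' | h'
          · exact h'
          · rw [h'] at h; exact absurd h (by decide)
        exact inv_mem (ihx.1 hx1)
      · intro h
        rw [map_inv] at h
        have hxa : θ x = C₂a := by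
          rcases hC (θ x) with h' | h'
          · rw [h'] at h; exact absurd h (by decide)
          · exact h'
        have e1 : x⁻¹ * t = (t * (x * t) * t)⁻¹ := by
          simp [mul_inv_rev, htinv, mul_assoc, htt]
        rw [e1]
        exact inv_mem (hconjH _ (ihx.2 hxa))
  have hkerEq : Subgroup.closure ks = θ.ker := by
    refine le_antisymm hle ?_
    intro w hw
    exact (hkermain w).1 hw
  -- the key computation
  have hkey : ∀ g : NECGroup γ r n, g * g = 1 → θ g = C₂a →
      ∀ (w : NECGroup γ r n) (hw : w ∈ θ.ker) (hw' : g * w * g⁻¹ ∈ θ.ker),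
      ζ ⟨g * w * g⁻¹, hw'⟩ * ζ ⟨w, hw⟩ = 1 := by
    intro g hg2 hga w hw hw'
    have hginv : g⁻¹ = g := inv_eq_of_mul_eq_one_right hg2
    have hgg : ∀ y : NECGroup γ r n, g * (g * y) = y := fun y => by
      rw [← mul_assoc, hg2, one_mul]
    have hgt : g * t ∈ θ.ker := by
      rw [MonoidHom.mem_ker, map_mul, hga, hta]; decide
    have hwk : w ∈ Subgroup.closure ks := by rw [hkerEq]; exact hw
    exact Subgroup.closure_induction
      (p := fun w hwc => ζ ⟨g * w * g⁻¹, θ.normal_ker.conj_mem w (hle hwc) g⟩ *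
        ζ ⟨w, hle hwc⟩ = 1)
      (by
        rintro _ ⟨s, hs, rfl⟩
        have Q : s * t ∈ θ.ker := hkθ _ ⟨s, hs, rfl⟩
        have P : g * (s * t) * g⁻¹ ∈ θ.ker := θ.normal_ker.conj_mem _ Q g
        show ζ ⟨g * (s * t) * g⁻¹, P⟩ * ζ ⟨s * t, Q⟩ = 1
        have e2 : (⟨g * (s * t) * g⁻¹, P⟩ : θ.ker) =
            ⟨g * t, hgt⟩ * (⟨s * t, Q⟩)⁻¹ * (⟨g * t, hgt⟩)⁻¹ :=
          Subtype.ext (by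
            show g * (s * t) * g⁻¹ = (g * t) * (s * t)⁻¹ * (g * t)⁻¹
            simp [mul_inv_rev, hginv, htinv, hsinv s hs, mul_assoc, htt, hgg])
        rw [e2, map_mul, map_mul, map_inv, map_inv]
        have : ∀ a b : A, a * b⁻¹ * a⁻¹ * b = 1 := fun a b => by
          rw [mul_right_comm a b⁻¹ a⁻¹, mul_inv_cancel, one_mul, inv_mul_cancel]
        exact this _ _)
      (by
        have P : g * 1 * g⁻¹ ∈ θ.ker := θ.normal_ker.conj_mem _ (one_mem _) g
        show ζ ⟨g * 1 * g⁻¹, P⟩ * ζ ⟨1, one_mem _⟩ = 1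
        have e2 : (⟨g * 1 * g⁻¹, P⟩ : θ.ker) = 1 :=
          Subtype.ext (by show g * 1 * g⁻¹ = 1; rw [mul_one, mul_inv_cancel])
        have e3 : (⟨1, one_mem _⟩ : θ.ker) = 1 := rfl
        rw [e2, e3, map_one, one_mul])
      (by
        intro x y hx hy ihx ihy
        have Qx : x ∈ θ.ker := hle hx
        have Qy : y ∈ θ.ker := hle hy
        have Qxy : x * y ∈ θ.ker := mul_mem Qx Qy
        have Px : g * x * g⁻¹ ∈ θ.ker := θ.normal_ker.conj_mem _ Qx g
        have Py : g * y * g⁻¹ ∈ θ.ker := θ.normal_ker.conj_mem _ Qy g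
        have Pxy : g * (x * y) * g⁻¹ ∈ θ.ker := θ.normal_ker.conj_mem _ Qxy g
        show ζ ⟨g * (x * y) * g⁻¹, Pxy⟩ * ζ ⟨x * y, Qxy⟩ = 1
        have hgig : ∀ z : NECGroup γ r n, g⁻¹ * (g * z) = z := fun z => by
          rw [← mul_assoc, inv_mul_cancel, one_mul]
        have e2 : (⟨g * (x * y) * g⁻¹, Pxy⟩ : θ.ker) =
            ⟨g * x * g⁻¹, Px⟩ * ⟨g * y * g⁻¹, Py⟩ :=
          Subtype.ext (by
            show g * (x * y) * g⁻¹ = (g * x * g⁻¹) * (g * y * g⁻¹)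
            simp [mul_assoc, hgig])
        have e3 : (⟨x * y, Qxy⟩ : θ.ker) = ⟨x, Qx⟩ * ⟨y, Qy⟩ := rfl
        have ihx' : ζ ⟨g * x * g⁻¹, Px⟩ * ζ ⟨x, Qx⟩ = 1 := ihx
        have ihy' : ζ ⟨g * y * g⁻¹, Py⟩ * ζ ⟨y, Qy⟩ = 1 := ihy
        rw [e2, e3, map_mul, map_mul, mul_mul_mul_comm, ihx', ihy', one_mul])
      (by
        intro x hx ihx
        have Qx : x ∈ θ.ker := hle hx
        have Qxi : x⁻¹ ∈ θ.ker := inv_mem Qx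
        have Px : g * x * g⁻¹ ∈ θ.ker := θ.normal_ker.conj_mem _ Qx g
        have Pxi : g * x⁻¹ * g⁻¹ ∈ θ.ker := θ.normal_ker.conj_mem _ Qxi g
        show ζ ⟨g * x⁻¹ * g⁻¹, Pxi⟩ * ζ ⟨x⁻¹, Qxi⟩ = 1
        have e2 : (⟨g * x⁻¹ * g⁻¹, Pxi⟩ : θ.ker) = (⟨g * x * g⁻¹, Px⟩)⁻¹ :=
          Subtype.ext (by
            show g * x⁻¹ * g⁻¹ = (g * x * g⁻¹)⁻¹
            simp [mul_inv_rev, mul_assoc])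
        have e3 : (⟨x⁻¹, Qxi⟩ : θ.ker) = (⟨x, Qx⟩)⁻¹ := rfl
        have ihx' : ζ ⟨g * x * g⁻¹, Px⟩ * ζ ⟨x, Qx⟩ = 1 := ihx
        rw [e2, e3, map_inv, map_inv, ← mul_inv_rev, mul_comm, ihx', inv_one])
      hwk
  constructor
  · -- e₁ e₂ ∈ ker ζ
    rw [MonoidHom.mem_ker]
    have hKe : Ke (n := n) ∈ θ.ker := hθe
    have hconjmem : t * Ke * t⁻¹ ∈ θ.ker := θ.normal_ker.conj_mem _ hKe t
    have myproof : Ke (n := n) * (t * Ke * t) ∈ θ.ker := by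
      rw [MonoidHom.mem_ker, map_mul, map_mul, map_mul, hθe, hta, one_mul, mul_one]
      decide
    show ζ (⟨Ke * (t * Ke * t), myproof⟩ : θ.ker) = 1
    have e1 : (⟨Ke * (t * Ke * t), myproof⟩ : θ.ker) = ⟨Ke, hKe⟩ * ⟨t * Ke * t⁻¹, hconjmem⟩ :=
      Subtype.ext (by
        show Ke (n := n) * (t * Ke * t) = Ke * (t * Ke * t⁻¹)
        rw [htinv])
    rw [e1, map_mul, mul_comm]
    exact hkey t ht2 hta Ke hKe hconjmem
  · -- normality
    rw [← Subgroup.normalizer_eq_top_iff, eq_top_iff, ← hS, Subgroup.closure_le]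
    intro s hs
    rw [SetLike.mem_coe, Subgroup.mem_normalizer_iff]
    have hss : ∀ y : NECGroup γ r n, s * (s * y) = y := fun y => by
      rw [← mul_assoc, hs2 s hs, one_mul]
    have main : ∀ h, h ∈ Subgroup.map θ.ker.subtype ζ.ker →
        s * h * s⁻¹ ∈ Subgroup.map θ.ker.subtype ζ.ker := by
      rintro _ ⟨⟨w, hwθ⟩, hwζ, rfl⟩
      simp only [Subgroup.coe_subtype]
      have hc : s * w * s⁻¹ ∈ θ.ker := θ.normal_ker.conj_mem _ hwθ s
      refine ⟨⟨s * w * s⁻¹, hc⟩, ?_, rfl⟩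
      have hwζ' : ζ ⟨w, hwθ⟩ = 1 := hwζ
      show ζ ⟨s * w * s⁻¹, hc⟩ = 1
      have hk := hkey s (hs2 s hs) (hsθ s hs) w hwθ hc
      rwa [hwζ', mul_one] at hk
    intro h
    constructor
    · exact main h
    · intro hsh
      have h2 := main _ hsh
      have e1 : s * (s * h * s⁻¹) * s⁻¹ = h := by
        simp [hsinv s hs, mul_assoc, hss, hs2 s hs]
      rwa [e1] at h2
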